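/- arXiv:1001.0312 — 2 statements merged into one kernel-verified Lean document; each statement's English description precedes it below -/
import Mathlib

section
/- Combinatorial telescoping relation for Sylvester's identity: Let n ≥ 1 and k ≥ 0 be integers and let N be a nonnegative integer. Then the number of elements of Q_{n,k} of weight N equals the number of elements of Q_{n,k} of weight N − n, plus the number of elements of H_{n,k} of weight N, plus the number of elements of H_{n,k+1} of weight N (where counts at negative weight are 0). -/
/-- Multiplicity of the part `j` in the partition `lam`, with the convention
`m_0(lam) = +∞`. -/
def multE (j : ℕ) (lam : Multiset ℕ) : ℕ∞ := if j = 0 then ⊤ else (lam.count j : ℕ∞)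

/-- `Q n k` is the set of partitions `λ` (multisets of positive integers) such that
no part of `λ` equals `2k+1` and `λ` has exactly `n - k` parts strictly greater
than `k`; it is empty when `k > n`. -/
def Q (n k : ℕ) : Set (Multiset ℕ) :=
  {lam | (∀ x ∈ lam, 0 < x ∧ x ≠ 2 * k + 1) ∧
    (lam.filter (fun x => k < x)).card + k = n}

/-- The weight of an element of `Q n k`: `k(3k+1)/2 + |λ|`. -/
def wt (k : ℕ) (lam : Multiset ℕ) : ℕ := k * (3 * k + 1) / 2 + lam.sum

/-- `H n k = {λ ∈ Q n k : m_{k+1}(λ) ≥ m_k(λ)}`, with the convention `m_0 = +∞`. -/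
def H (n k : ℕ) : Set (Multiset ℕ) :=
  {lam ∈ Q n k | multE k lam ≤ multE (k + 1) lam}


open Multiset

/-! ### The surgery maps -/

/-- Remove one part `k` (when `k ≥ 1`) and fuse each pair `{k, k+1}` into a part `2k+1`. -/
def step1 (k : ℕ) (m : Multiset ℕ) : Multiset ℕ :=
  m.filter (fun x => ¬(x = k ∨ x = k + 1)) +
    replicate (m.count k - m.count (k + 1) - (if k = 0 then 0 else 1)) k +
    replicate (m.count (k + 1)) (2 * k + 1)

def unstep1 (k : ℕ) (m : Multiset ℕ) : Multiset ℕ :=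
  m.filter (fun x => ¬(x = 2 * k + 1)) +
    replicate (m.count (2 * k + 1) + (if k = 0 then 0 else 1)) k +
    replicate (m.count (2 * k + 1)) (k + 1)

/-- Subtract 1 from every part `≥ k+2`. -/
def stepA (k : ℕ) (m : Multiset ℕ) : Multiset ℕ :=
  m.filter (fun x => x < k + 2) + (m.filter (fun x => k + 2 ≤ x)).map (fun x => x - 1)

def unstepA (k : ℕ) (m : Multiset ℕ) : Multiset ℕ :=
  m.filter (fun x => x < k + 1) + (m.filter (fun x => k + 1 ≤ x)).map (fun x => x + 1)

/-- Remove one part `2k+2` and split every part `2k+3` into `{k+1, k+2}`. -/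
def stepB (k : ℕ) (m : Multiset ℕ) : Multiset ℕ :=
  m.filter (fun x => ¬(x = 2 * k + 3 ∨ x = 2 * k + 2)) +
    replicate (m.count (2 * k + 2) - 1) (2 * k + 2) +
    replicate (m.count (2 * k + 3)) (k + 1) +
    replicate (m.count (2 * k + 3)) (k + 2)

def unstepB (k : ℕ) (m : Multiset ℕ) : Multiset ℕ :=
  m.filter (fun x => ¬(x = k + 1 ∨ x = k + 2)) +
    replicate (m.count (k + 2) - m.count (k + 1)) (k + 2) +
    replicate (m.count (k + 1)) (2 * k + 3) +
    replicate 1 (2 * k + 2)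

/-! ### Generic multiset lemmas -/

lemma count_map_pred {m : Multiset ℕ} (h : ∀ x ∈ m, 0 < x) (j : ℕ) :
    (m.map (fun x => x - 1)).count j = m.count (j + 1) := by
  induction m using Multiset.induction with
  | empty => simp
  | cons a s ih =>
    rw [map_cons, count_cons, count_cons, ih (fun x hx => h x (mem_cons_of_mem hx))]
    have ha := h a (mem_cons_self a s)
    have : (j = a - 1) ↔ (j + 1 = a) := by omega
    simp only [this]

lemma count_map_succ (m : Multiset ℕ) (j : ℕ) :
    (m.map (fun x => x + 1)).count j = if j = 0 then 0 else m.count (j - 1) := by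
  rcases Nat.eq_zero_or_pos j with h | h
  · subst h
    rw [if_pos rfl, count_eq_zero, mem_map]
    rintro ⟨a, _, ha⟩
    omega
  · obtain ⟨i, rfl⟩ : ∃ i, j = i + 1 := ⟨j - 1, by omega⟩
    rw [if_neg (by omega)]
    have := count_map_eq_count' (fun x : ℕ => x + 1) m (add_left_injective 1) i
    simpa using this

lemma sum_map_pred {m : Multiset ℕ} (h : ∀ x ∈ m, 0 < x) :
    (m.map (fun x => x - 1)).sum + Multiset.card m = m.sum := by
  induction m using Multiset.induction with
  | empty => simp
  | cons a s ih =>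
    have ha := h a (mem_cons_self a s)
    have ihs := ih (fun x hx => h x (mem_cons_of_mem hx))
    simp only [map_cons, sum_cons, card_cons]
    omega

lemma sum_map_succ (m : Multiset ℕ) :
    (m.map (fun x => x + 1)).sum = m.sum + Multiset.card m := by
  induction m using Multiset.induction with
  | empty => simp
  | cons a s ih => simp only [map_cons, sum_cons, card_cons, ih]; omega

/-- Splitting off the parts equal to `j+1` from the parts `> j`. -/
lemma card_filter_succ (m : Multiset ℕ) (j : ℕ) :
    (m.filter (fun x => j < x)).card = (m.filter (fun x => j + 1 < x)).card + m.count (j + 1) := by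
  have h := filter_add_filter (fun x => j + 1 < x) (fun x => x = j + 1) m
  have h1 : filter (fun a => j + 1 < a ∨ a = j + 1) m = filter (fun x => j < x) m :=
    filter_congr (fun x _ => by constructor <;> omega)
  have h2 : filter (fun a : ℕ => j + 1 < a ∧ a = j + 1) m = 0 :=
    filter_eq_nil.2 (fun x _ => by omega)
  rw [h1, h2, add_zero] at h
  have := congrArg Multiset.card h
  rw [card_add, filter_eq', card_replicate] at this
  omega

lemma sum_filter_single (m : Multiset ℕ) (a : ℕ) :
    (m.filter (fun x => ¬(x = a))).sum + m.count a * a = m.sum := by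
  conv_rhs => rw [← filter_add_not (fun x => x = a) m]
  rw [sum_add, filter_eq', sum_replicate, smul_eq_mul]
  omega

lemma sum_filter_two (m : Multiset ℕ) {a b : ℕ} (hab : a ≠ b) :
    (m.filter (fun x => ¬(x = a ∨ x = b))).sum + m.count a * a + m.count b * b = m.sum := by
  conv_rhs => rw [← filter_add_not (fun x => x = a ∨ x = b) m]
  have h := filter_add_filter (fun x : ℕ => x = a) (fun x => x = b) m
  have h2 : filter (fun x : ℕ => x = a ∧ x = b) m = 0 :=
    filter_eq_nil.2 (fun x _ => by rintro ⟨rfl, rfl⟩; exact hab rfl)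
  rw [h2, add_zero, filter_eq', filter_eq'] at h
  rw [sum_add, ← h, sum_add, sum_replicate, sum_replicate, smul_eq_mul, smul_eq_mul]
  ring_nf

/-- Count description of `step1`. -/
lemma count_step1 (k j : ℕ) (m : Multiset ℕ) :
    (step1 k m).count j =
      (if j = k ∨ j = k + 1 then 0 else m.count j) +
      (if j = k then m.count k - m.count (k + 1) - (if k = 0 then 0 else 1) else 0) +
      (if j = 2 * k + 1 then m.count (k + 1) else 0) := by
  rw [step1, count_add, count_add, count_filter, count_replicate, count_replicate]
  split_ifs <;> omega

lemma count_unstep1 (k j : ℕ) (m : Multiset ℕ) :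
    (unstep1 k m).count j =
      (if j = 2 * k + 1 then 0 else m.count j) +
      (if j = k then m.count (2 * k + 1) + (if k = 0 then 0 else 1) else 0) +
      (if j = k + 1 then m.count (2 * k + 1) else 0) := by
  rw [unstep1, count_add, count_add, count_filter, count_replicate, count_replicate]
  split_ifs <;> omega

lemma count_stepA (k j : ℕ) (m : Multiset ℕ) :
    (stepA k m).count j =
      (if j < k + 2 then m.count j else 0) + (if k + 1 ≤ j then m.count (j + 1) else 0) := by
  rw [stepA, count_add, count_filter,
    count_map_pred (fun x hx => by have := (mem_filter.1 hx).2; omega), count_filter]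
  split_ifs <;> omega

lemma count_unstepA (k j : ℕ) (m : Multiset ℕ) :
    (unstepA k m).count j =
      (if j < k + 1 then m.count j else 0) + (if k + 2 ≤ j then m.count (j - 1) else 0) := by
  rw [unstepA, count_add, count_filter, count_map_succ, count_filter]
  split_ifs <;> omega
lemma count_stepB (k j : ℕ) (m : Multiset ℕ) :
    (stepB k m).count j =
      (if j = 2 * k + 3 ∨ j = 2 * k + 2 then 0 else m.count j) +
      (if j = 2 * k + 2 then m.count (2 * k + 2) - 1 else 0) +
      (if j = k + 1 then m.count (2 * k + 3) else 0) +
      (if j = k + 2 then m.count (2 * k + 3) else 0) := by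
  rw [stepB, count_add, count_add, count_add, count_filter, count_replicate, count_replicate,
    count_replicate]
  split_ifs <;> omega

lemma count_unstepB (k j : ℕ) (m : Multiset ℕ) :
    (unstepB k m).count j =
      (if j = k + 1 ∨ j = k + 2 then 0 else m.count j) +
      (if j = k + 2 then m.count (k + 2) - m.count (k + 1) else 0) +
      (if j = 2 * k + 3 then m.count (k + 1) else 0) +
      (if j = 2 * k + 2 then 1 else 0) := by
  rw [unstepB, count_add, count_add, count_add, count_filter, count_replicate, count_replicate,
    count_replicate]
  split_ifs <;> omega

/-- The intermediate set: positive parts, no part `k+1`, exactly `n-k` parts `> k+1`,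
weight bookkeeping `k + wt k m = N`. -/
def D (n k N : ℕ) : Set (Multiset ℕ) :=
  {m | (∀ x ∈ m, 0 < x) ∧ m.count (k + 1) = 0 ∧
    (m.filter (fun x => k + 1 < x)).card + k = n ∧ k + wt k m = N}

lemma trap_succ (k : ℕ) : (k + 1) * (3 * (k + 1) + 1) / 2 = k * (3 * k + 1) / 2 + (3 * k + 2) := by
  obtain ⟨m, hm⟩ : ∃ m, k * (3 * k + 1) = 2 * m := by
    rcases Nat.even_or_odd k with ⟨t, ht⟩ | ⟨t, ht⟩
    · exact ⟨t * (3 * k + 1), by subst ht; ring⟩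
    · exact ⟨k * (3 * t + 2), by subst ht; ring⟩
  have h2 : (k + 1) * (3 * (k + 1) + 1) = k * (3 * k + 1) + (6 * k + 4) := by ring
  omega

lemma mem_Q_iff {n k : ℕ} {m : Multiset ℕ} :
    m ∈ Q n k ↔ (∀ x ∈ m, 0 < x) ∧ m.count (2 * k + 1) = 0 ∧
      (m.filter (fun x => k < x)).card + k = n := by
  constructor
  · rintro ⟨h1, h2⟩
    exact ⟨fun x hx => (h1 x hx).1, count_eq_zero.2 (fun hc => (h1 _ hc).2 rfl), h2⟩
  · rintro ⟨h1, h2, h3⟩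
    refine ⟨fun x hx => ⟨h1 x hx, fun he => ?_⟩, h3⟩
    rw [he] at hx
    rw [count_eq_zero] at h2
    exact h2 hx

/-! ### Sum lemmas -/

lemma sum_step1 {k : ℕ} {m : Multiset ℕ} (h0 : m.count 0 = 0)
    (hC : m.count (k + 1) < m.count k ∨ k = 0) :
    (step1 k m).sum + k = m.sum := by
  have hf := sum_filter_two m (show k ≠ k + 1 by omega)
  rw [step1, sum_add, sum_add, sum_replicate, sum_replicate, smul_eq_mul, smul_eq_mul]
  rcases Nat.eq_zero_or_pos k with rfl | hk
  · simp only [if_pos rfl] at *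
    omega
  · rw [if_neg (by omega)]
    have hcc : m.count (k + 1) + 1 ≤ m.count k := by omega
    set a := m.count k with ha
    set b := m.count (k + 1) with hb
    set S := (m.filter (fun x => ¬(x = k ∨ x = k + 1))).sum with hS
    have h1 : b ≤ a := by omega
    have h2 : 1 ≤ a - b := by omega
    zify [h1, h2] at hf ⊢
    linear_combination hf

lemma sum_unstep1 {k : ℕ} {m : Multiset ℕ} (hk1 : m.count (k + 1) = 0) :
    (unstep1 k m).sum = m.sum + k := by
  have hf := sum_filter_single m (2 * k + 1)
  rw [unstep1, sum_add, sum_add, sum_replicate, sum_replicate, smul_eq_mul, smul_eq_mul]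
  rcases Nat.eq_zero_or_pos k with rfl | hk
  · have hc : m.count (2 * 0 + 1) = m.count (0 + 1) := by norm_num
    simp only [if_pos rfl] at *
    omega
  · rw [if_neg (by omega)]
    set c := m.count (2 * k + 1) with hc
    set S := (m.filter (fun x => ¬(x = 2 * k + 1))).sum with hS
    zify at hf ⊢
    linear_combination hf

lemma sum_stepA (k : ℕ) (m : Multiset ℕ) :
    (stepA k m).sum + (m.filter (fun x => k + 1 < x)).card = m.sum := by
  have hsp : ∀ x ∈ m.filter (fun x => k + 2 ≤ x), 0 < x := fun x hx => by
    have := (mem_filter.1 hx).2; omega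
  have hmp := sum_map_pred hsp
  have hnot := filter_add_not (fun x => x < k + 2) m
  have hcongr : m.filter (fun x => ¬ x < k + 2) = m.filter (fun x => k + 2 ≤ x) :=
    filter_congr (fun x _ => by constructor <;> omega)
  have hcongr2 : m.filter (fun x => k + 1 < x) = m.filter (fun x => k + 2 ≤ x) :=
    filter_congr (fun x _ => by constructor <;> omega)
  have hsum := congrArg Multiset.sum hnot
  rw [sum_add, hcongr] at hsum
  rw [stepA, sum_add, hcongr2]
  omega

lemma sum_unstepA (k : ℕ) (m : Multiset ℕ) :
    (unstepA k m).sum = m.sum + (m.filter (fun x => k + 1 ≤ x)).card := by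
  have hnot := filter_add_not (fun x => x < k + 1) m
  have hcongr : m.filter (fun x => ¬ x < k + 1) = m.filter (fun x => k + 1 ≤ x) :=
    filter_congr (fun x _ => by constructor <;> omega)
  have hsum := congrArg Multiset.sum hnot
  rw [sum_add, hcongr] at hsum
  rw [unstepA, sum_add, sum_map_succ]
  omega

lemma sum_stepB {k : ℕ} {m : Multiset ℕ} (h : 1 ≤ m.count (2 * k + 2)) :
    (stepB k m).sum + (2 * k + 2) = m.sum := by
  have hf := sum_filter_two m (show 2 * k + 3 ≠ 2 * k + 2 by omega)
  rw [stepB, sum_add, sum_add, sum_add, sum_replicate, sum_replicate, sum_replicate,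
    smul_eq_mul, smul_eq_mul, smul_eq_mul]
  set c2 := m.count (2 * k + 2) with hc2
  set c3 := m.count (2 * k + 3) with hc3
  set S := (m.filter (fun x => ¬(x = 2 * k + 3 ∨ x = 2 * k + 2))).sum with hS
  zify [h] at hf ⊢
  linear_combination hf

lemma sum_unstepB {k : ℕ} {m : Multiset ℕ} (h : m.count (k + 1) ≤ m.count (k + 2)) :
    (unstepB k m).sum = m.sum + (2 * k + 2) := by
  have hf := sum_filter_two m (show k + 1 ≠ k + 2 by omega)
  rw [unstepB, sum_add, sum_add, sum_add, sum_replicate, sum_replicate, sum_replicate,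
    smul_eq_mul, smul_eq_mul, smul_eq_mul]
  set c1 := m.count (k + 1) with hc1
  set c2 := m.count (k + 2) with hc2
  set S := (m.filter (fun x => ¬(x = k + 1 ∨ x = k + 2))).sum with hS
  zify [h] at hf ⊢
  linear_combination hf

/-! ### The set `C` of elements of `Q` violating the `H` condition -/

def Cset (n k N : ℕ) : Set (Multiset ℕ) :=
  {m | m ∈ Q n k ∧ (m.count (k + 1) < m.count k ∨ k = 0) ∧ wt k m = N}

lemma count_zero_eq {m : Multiset ℕ} (h1 : ∀ x ∈ m, 0 < x) : m.count 0 = 0 :=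
  count_eq_zero.2 (fun h => absurd (h1 0 h) (lt_irrefl 0))

lemma hc01 (k : ℕ) (m : Multiset ℕ) : k = 0 → m.count (k + 1) = m.count (2 * k + 1) :=
  fun h => by subst h; norm_num

lemma step1_mapsTo {n k N : ℕ} : Set.MapsTo (step1 k) (Cset n k N) (D n k N) := by
  rintro m ⟨hQ, hC, hw⟩
  obtain ⟨h1, h2, h3⟩ := mem_Q_iff.1 hQ
  have h0 : m.count 0 = 0 := count_zero_eq h1
  have h00 : k = 0 → m.count k = 0 := fun h => by subst h; exact h0
  refine ⟨?_, ?_, ?_, ?_⟩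
  · intro x hx
    rw [step1] at hx
    rcases mem_add.1 hx with hx' | hx'
    · rcases mem_add.1 hx' with hx'' | hx''
      · exact h1 x (mem_filter.1 hx'').1
      · have hxk := eq_of_mem_replicate hx''
        rcases Nat.eq_zero_or_pos k with rfl | hk
        · exfalso; simp [h0] at hx''
        · omega
    · have := eq_of_mem_replicate hx'; omega
  · rw [count_step1]
    have := hc01 k m
    split_ifs <;> omega
  · rw [step1, filter_add, filter_add, card_add, card_add, filter_filter]
    have e1 : m.filter (fun a => k + 1 < a ∧ ¬(a = k ∨ a = k + 1)) =
        m.filter (fun x => k + 1 < x) := filter_congr (fun x _ => by constructor <;> omega)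
    have e2 : (replicate (m.count k - m.count (k + 1) - if k = 0 then 0 else 1) k).filter
        (fun x => k + 1 < x) = 0 :=
      filter_eq_nil.2 (fun x hx => by have := eq_of_mem_replicate hx; omega)
    have e3 : ((replicate (m.count (k + 1)) (2 * k + 1)).filter
        (fun x => k + 1 < x)).card = m.count (k + 1) := by
      rcases Nat.eq_zero_or_pos k with rfl | hk
      · have hz : m.count (0 + 1) = 0 := by have := hc01 0 m; omega
        rw [hz]; simp
      · rw [filter_eq_self.2 (fun x hx => by have := eq_of_mem_replicate hx; omega),
          card_replicate]
    rw [e1, e2, e3]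
    have := card_filter_succ m k
    simp only [card_zero]
    omega
  · have hs := sum_step1 h0 hC
    simp only [wt] at hw ⊢
    omega

lemma unstep1_mapsTo {n k N : ℕ} : Set.MapsTo (unstep1 k) (D n k N) (Cset n k N) := by
  rintro m ⟨h1, hk1, h3, hw⟩
  have h0 : m.count 0 = 0 := count_zero_eq h1
  have hco := hc01 k m
  refine ⟨mem_Q_iff.2 ⟨?_, ?_, ?_⟩, ?_, ?_⟩
  · intro x hx
    rw [unstep1] at hx
    rcases mem_add.1 hx with hx' | hx'
    · rcases mem_add.1 hx' with hx'' | hx''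
      · exact h1 x (mem_filter.1 hx'').1
      · have hxk := eq_of_mem_replicate hx''
        rcases Nat.eq_zero_or_pos k with rfl | hk
        · exfalso
          have hz : m.count (2 * 0 + 1) = 0 := by
            have := hc01 0 m
            omega
          simp [hz] at hx''
        · omega
    · have := eq_of_mem_replicate hx'; omega
  · rw [count_unstep1]
    split_ifs <;> omega
  · -- card of filter (k < ·)
    rw [unstep1, filter_add, filter_add, card_add, card_add, filter_filter]
    have hpq := filter_add_filter (fun a : ℕ => k < a ∧ ¬(a = 2 * k + 1)) (fun a => a = 2 * k + 1) m
    have hpq1 : m.filter (fun a => (k < a ∧ ¬(a = 2 * k + 1)) ∨ a = 2 * k + 1) =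
        m.filter (fun x => k < x) := filter_congr (fun x _ => by constructor <;> omega)
    have hpq2 : m.filter (fun a : ℕ => (k < a ∧ ¬(a = 2 * k + 1)) ∧ a = 2 * k + 1) = 0 :=
      filter_eq_nil.2 (fun x _ => by omega)
    rw [hpq1, hpq2, add_zero] at hpq
    have hcards := congrArg Multiset.card hpq
    rw [card_add, filter_eq', card_replicate] at hcards
    have e2 : (replicate (m.count (2 * k + 1) + if k = 0 then 0 else 1) k).filter
        (fun x => k < x) = 0 :=
      filter_eq_nil.2 (fun x hx => by have := eq_of_mem_replicate hx; omega)
    have e3 : ((replicate (m.count (2 * k + 1)) (k + 1)).filter (fun x => k < x)).card =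
        m.count (2 * k + 1) := by
      rw [filter_eq_self.2 (fun x hx => by have := eq_of_mem_replicate hx; omega), card_replicate]
    rw [e2, e3]
    have := card_filter_succ m k
    simp only [card_zero]
    omega
  · -- the C condition
    rcases Nat.eq_zero_or_pos k with rfl | hk
    · exact Or.inr rfl
    · left
      rw [count_unstep1, count_unstep1]
      split_ifs <;> omega
  · have hs := sum_unstep1 hk1
    simp only [wt] at hw ⊢
    omega

lemma step1_leftInv {k : ℕ} {m : Multiset ℕ} (h0 : m.count 0 = 0)
    (h2 : m.count (2 * k + 1) = 0) (hC : m.count (k + 1) < m.count k ∨ k = 0) :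
    unstep1 k (step1 k m) = m := by
  have h00 : k = 0 → m.count k = 0 := fun h => by subst h; exact h0
  have hco := hc01 k m
  ext j
  rcases eq_or_ne j k with rfl | hjk
  · simp only [count_unstep1, count_step1, eq_self_iff_true, true_or, or_true, if_true]
    split_ifs <;> omega
  rcases eq_or_ne j (k + 1) with rfl | hj1
  · simp only [count_unstep1, count_step1, eq_self_iff_true, true_or, or_true, if_true]
    split_ifs <;> omega
  rcases eq_or_ne j (2 * k + 1) with rfl | hj2
  · simp only [count_unstep1, count_step1, eq_self_iff_true, true_or, or_true, if_true]
    split_ifs <;> omega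
  · simp only [count_unstep1, count_step1, eq_self_iff_true, true_or, or_true, if_true]
    split_ifs <;> omega

lemma step1_rightInv {k : ℕ} {m : Multiset ℕ} (h1 : ∀ x ∈ m, 0 < x)
    (hk1 : m.count (k + 1) = 0) :
    step1 k (unstep1 k m) = m := by
  have h0 : m.count 0 = 0 := count_zero_eq h1
  have h00 : k = 0 → m.count k = 0 := fun h => by subst h; exact h0
  have hco := hc01 k m
  ext j
  rcases eq_or_ne j k with rfl | hjk
  · simp only [count_step1, count_unstep1, eq_self_iff_true, true_or, or_true, if_true]
    split_ifs <;> omega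
  rcases eq_or_ne j (k + 1) with rfl | hj1
  · simp only [count_step1, count_unstep1, eq_self_iff_true, true_or, or_true, if_true]
    split_ifs <;> omega
  rcases eq_or_ne j (2 * k + 1) with rfl | hj2
  · simp only [count_step1, count_unstep1, eq_self_iff_true, true_or, or_true, if_true]
    split_ifs <;> omega
  · simp only [count_step1, count_unstep1, eq_self_iff_true, true_or, or_true, if_true]
    split_ifs <;> omega

/-! ### The `stepA` bijection -/

def DA (n k N : ℕ) : Set (Multiset ℕ) := {m ∈ D n k N | m.count (2 * k + 2) = 0}
def DB (n k N : ℕ) : Set (Multiset ℕ) := {m ∈ D n k N | m.count (2 * k + 2) ≠ 0}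

def S2set (n k N : ℕ) : Set (Multiset ℕ) := {m | m ∈ Q n k ∧ wt k m + n = N}

lemma stepA_mapsTo {n k N : ℕ} : Set.MapsTo (stepA k) (DA n k N) (S2set n k N) := by
  rintro m ⟨⟨h1, hk1, h3, hw⟩, hA⟩
  have hco := hc01 k m
  refine ⟨mem_Q_iff.2 ⟨?_, ?_, ?_⟩, ?_⟩
  · intro x hx
    rw [stepA] at hx
    rcases mem_add.1 hx with hx' | hx'
    · exact h1 x (mem_filter.1 hx').1
    · obtain ⟨y, hy, hxy⟩ := mem_map.1 hx'
      have := (mem_filter.1 hy).2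
      omega
  · rw [count_stepA]
    have I7 : m.count (2 * k + 1 + 1) = m.count (2 * k + 2) := rfl
    split_ifs <;> omega
  · rw [stepA, filter_add, card_add, filter_filter]
    have e1 : m.filter (fun a => k < a ∧ a < k + 2) = m.filter (fun a => a = k + 1) :=
      filter_congr (fun x _ => by constructor <;> omega)
    have e2 : ((m.filter (fun x => k + 2 ≤ x)).map (fun x => x - 1)).filter (fun x => k < x) =
        (m.filter (fun x => k + 2 ≤ x)).map (fun x => x - 1) := by
      refine filter_eq_self.2 (fun x hx => ?_)
      obtain ⟨y, hy, hxy⟩ := mem_map.1 hx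
      have := (mem_filter.1 hy).2
      omega
    have e3 : m.filter (fun x => k + 2 ≤ x) = m.filter (fun x => k + 1 < x) :=
      filter_congr (fun x _ => by constructor <;> omega)
    rw [e1, e2, filter_eq', card_replicate, card_map, e3, hk1]
    omega
  · have hs := sum_stepA k m
    simp only [wt] at hw ⊢
    omega

lemma unstepA_mapsTo {n k N : ℕ} : Set.MapsTo (unstepA k) (S2set n k N) (DA n k N) := by
  rintro m ⟨hQ, hw⟩
  obtain ⟨h1, h2, h3⟩ := mem_Q_iff.1 hQ
  refine ⟨⟨?_, ?_, ?_, ?_⟩, ?_⟩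
  · intro x hx
    rw [unstepA] at hx
    rcases mem_add.1 hx with hx' | hx'
    · exact h1 x (mem_filter.1 hx').1
    · obtain ⟨y, hy, hxy⟩ := mem_map.1 hx'
      have := h1 y (mem_filter.1 hy).1
      omega
  · rw [count_unstepA]
    split_ifs <;> omega
  · rw [unstepA, filter_add, card_add, filter_filter]
    have e1 : m.filter (fun a => k + 1 < a ∧ a < k + 1) = 0 :=
      filter_eq_nil.2 (fun x _ => by omega)
    have e2 : ((m.filter (fun x => k + 1 ≤ x)).map (fun x => x + 1)).filter
        (fun x => k + 1 < x) = (m.filter (fun x => k + 1 ≤ x)).map (fun x => x + 1) := by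
      refine filter_eq_self.2 (fun x hx => ?_)
      obtain ⟨y, hy, hxy⟩ := mem_map.1 hx
      have := (mem_filter.1 hy).2
      omega
    have e3 : m.filter (fun x => k + 1 ≤ x) = m.filter (fun x => k < x) :=
      filter_congr (fun x _ => by constructor <;> omega)
    rw [e1, e2, card_map, e3]
    simp only [card_zero]
    omega
  · have hs := sum_unstepA k m
    have e3 : m.filter (fun x => k + 1 ≤ x) = m.filter (fun x => k < x) :=
      filter_congr (fun x _ => by constructor <;> omega)
    rw [e3] at hs
    simp only [wt] at hw ⊢
    omega
  · rw [count_unstepA]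
    have I4 : m.count (2 * k + 2 - 1) = m.count (2 * k + 1) := rfl
    split_ifs <;> omega

lemma stepA_leftInv {k : ℕ} {m : Multiset ℕ} (hk1 : m.count (k + 1) = 0)
    (hA : m.count (2 * k + 2) = 0) :
    unstepA k (stepA k m) = m := by
  ext j
  have I1 : j = k + 1 → m.count j = m.count (k + 1) := fun h => by rw [h]
  have I2 : 1 ≤ j → m.count (j - 1 + 1) = m.count j := fun h => by rw [Nat.sub_add_cancel h]
  have I3 : m.count (j + 1 - 1) = m.count j := rfl
  have I8 : j = k + 2 → m.count (j - 1) = m.count (k + 1) := fun h => by subst h; rfl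
  simp only [count_unstepA, count_stepA]
  split_ifs <;> omega

lemma stepA_rightInv {k : ℕ} {m : Multiset ℕ} (h2 : m.count (2 * k + 1) = 0) :
    stepA k (unstepA k m) = m := by
  ext j
  have I1 : j = k + 1 → m.count j = m.count (k + 1) := fun h => by rw [h]
  have I2 : 1 ≤ j → m.count (j - 1 + 1) = m.count j := fun h => by rw [Nat.sub_add_cancel h]
  have I3 : m.count (j + 1 - 1) = m.count j := rfl
  have I5 : m.count (k + 2 - 1) = m.count (k + 1) := rfl
  have I6 : j = 2 * k + 1 → m.count j = m.count (2 * k + 1) := fun h => by rw [h]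
  simp only [count_stepA, count_unstepA]
  split_ifs <;> omega

/-! ### The `stepB` bijection -/

def S3set (n k N : ℕ) : Set (Multiset ℕ) := {m | m ∈ H n (k + 1) ∧ wt (k + 1) m = N}

lemma mem_H_iff {n k : ℕ} {m : Multiset ℕ} :
    m ∈ H n (k + 1) ↔ m ∈ Q n (k + 1) ∧ m.count (k + 1) ≤ m.count (k + 2) := by
  unfold H multE
  simp only [Set.mem_setOf_eq, Set.mem_sep_iff]
  rw [if_neg (by omega), if_neg (by omega)]
  rw [Nat.cast_le]

lemma hc02 (k : ℕ) (m : Multiset ℕ) : k = 0 → m.count (k + 2) = m.count (2 * k + 2) :=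
  fun h => by subst h; rfl

lemma stepB_mapsTo {n k N : ℕ} : Set.MapsTo (stepB k) (DB n k N) (S3set n k N) := by
  rintro m ⟨⟨h1, hk1, h3, hw⟩, hB⟩
  have hB' : 1 ≤ m.count (2 * k + 2) := by omega
  have hco2 := hc02 k m
  refine ⟨mem_H_iff.2 ⟨mem_Q_iff.2 ⟨?_, ?_, ?_⟩, ?_⟩, ?_⟩
  · intro x hx
    rw [stepB] at hx
    rcases mem_add.1 hx with hx' | hx'
    · rcases mem_add.1 hx' with hx'' | hx''
      · rcases mem_add.1 hx'' with hx3 | hx3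
        · exact h1 x (mem_filter.1 hx3).1
        · have := eq_of_mem_replicate hx3; omega
      · have := eq_of_mem_replicate hx''; omega
    · have := eq_of_mem_replicate hx'; omega
  · show (stepB k m).count (2 * (k + 1) + 1) = 0
    have : 2 * (k + 1) + 1 = 2 * k + 3 := by omega
    rw [this, count_stepB]
    split_ifs <;> omega
  · show ((stepB k m).filter (fun x => k + 1 < x)).card + (k + 1) = n
    rw [stepB, filter_add, filter_add, filter_add, card_add, card_add, card_add]
    have hpq := filter_add_filter
      (fun a : ℕ => k + 1 < a ∧ ¬(a = 2 * k + 3 ∨ a = 2 * k + 2))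
      (fun a => a = 2 * k + 3 ∨ a = 2 * k + 2) m
    have hpq1 : m.filter (fun a => (k + 1 < a ∧ ¬(a = 2 * k + 3 ∨ a = 2 * k + 2)) ∨
        (a = 2 * k + 3 ∨ a = 2 * k + 2)) = m.filter (fun x => k + 1 < x) :=
      filter_congr (fun x _ => by constructor <;> omega)
    have hpq2 : m.filter (fun a : ℕ => (k + 1 < a ∧ ¬(a = 2 * k + 3 ∨ a = 2 * k + 2)) ∧
        (a = 2 * k + 3 ∨ a = 2 * k + 2)) = 0 :=
      filter_eq_nil.2 (fun x _ => by omega)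
    rw [hpq1, hpq2, add_zero] at hpq
    have hq : m.filter (fun a : ℕ => a = 2 * k + 3 ∨ a = 2 * k + 2) =
        m.filter (fun a : ℕ => a = 2 * k + 3) + m.filter (fun a : ℕ => a = 2 * k + 2) := by
      have h' := filter_add_filter (fun a : ℕ => a = 2 * k + 3) (fun a => a = 2 * k + 2) m
      have h'' : m.filter (fun a : ℕ => a = 2 * k + 3 ∧ a = 2 * k + 2) = 0 :=
        filter_eq_nil.2 (fun x _ => by omega)
      rw [h'', add_zero] at h'
      exact h'.symm
    rw [hq] at hpq
    have hcards := congrArg Multiset.card hpq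
    rw [card_add, card_add, filter_eq', filter_eq', card_replicate, card_replicate] at hcards
    rw [filter_filter]
    have e2 : (replicate (m.count (2 * k + 2) - 1) (2 * k + 2)).filter
        (fun x => k + 1 < x) = replicate (m.count (2 * k + 2) - 1) (2 * k + 2) :=
      filter_eq_self.2 (fun x hx => by have := eq_of_mem_replicate hx; omega)
    have e3 : (replicate (m.count (2 * k + 3)) (k + 1)).filter (fun x => k + 1 < x) = 0 :=
      filter_eq_nil.2 (fun x hx => by have := eq_of_mem_replicate hx; omega)
    have e4 : (replicate (m.count (2 * k + 3)) (k + 2)).filter (fun x => k + 1 < x) =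
        replicate (m.count (2 * k + 3)) (k + 2) :=
      filter_eq_self.2 (fun x hx => by have := eq_of_mem_replicate hx; omega)
    rw [e2, e3, e4, card_replicate, card_replicate]
    simp only [card_zero]
    omega
  · show (stepB k m).count (k + 1) ≤ (stepB k m).count (k + 2)
    rw [count_stepB, count_stepB]
    split_ifs <;> omega
  · show wt (k + 1) (stepB k m) = N
    have hs := sum_stepB hB'
    simp only [wt, trap_succ k] at hw ⊢
    omega

lemma unstepB_mapsTo {n k N : ℕ} : Set.MapsTo (unstepB k) (S3set n k N) (DB n k N) := by
  rintro m ⟨hH, hw⟩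
  obtain ⟨hQ, hcond⟩ := mem_H_iff.1 hH
  obtain ⟨h1, h2, h3⟩ := mem_Q_iff.1 hQ
  have h2' : m.count (2 * k + 3) = 0 := h2
  have hco2 := hc02 k m
  refine ⟨⟨?_, ?_, ?_, ?_⟩, ?_⟩
  · intro x hx
    rw [unstepB] at hx
    rcases mem_add.1 hx with hx' | hx'
    · rcases mem_add.1 hx' with hx'' | hx''
      · rcases mem_add.1 hx'' with hx3 | hx3
        · exact h1 x (mem_filter.1 hx3).1
        · have := eq_of_mem_replicate hx3; omega
      · have := eq_of_mem_replicate hx''; omega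
    · have := eq_of_mem_replicate hx'; omega
  · rw [count_unstepB]
    split_ifs <;> omega
  · have h3' : (m.filter (fun x => k + 1 < x)).card + (k + 1) = n := h3
    rw [unstepB, filter_add, filter_add, filter_add, card_add, card_add, card_add]
    have hpq := filter_add_filter
      (fun a : ℕ => k + 1 < a ∧ ¬(a = k + 1 ∨ a = k + 2)) (fun a => a = k + 2) m
    have hpq1 : m.filter (fun a => (k + 1 < a ∧ ¬(a = k + 1 ∨ a = k + 2)) ∨ a = k + 2) =
        m.filter (fun x => k + 1 < x) := filter_congr (fun x _ => by constructor <;> omega)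
    have hpq2 : m.filter (fun a : ℕ => (k + 1 < a ∧ ¬(a = k + 1 ∨ a = k + 2)) ∧ a = k + 2) = 0 :=
      filter_eq_nil.2 (fun x _ => by omega)
    rw [hpq1, hpq2, add_zero] at hpq
    have hcards := congrArg Multiset.card hpq
    rw [card_add, filter_eq', card_replicate] at hcards
    rw [filter_filter]
    have e2 : (replicate (m.count (k + 2) - m.count (k + 1)) (k + 2)).filter
        (fun x => k + 1 < x) = replicate (m.count (k + 2) - m.count (k + 1)) (k + 2) :=
      filter_eq_self.2 (fun x hx => by have := eq_of_mem_replicate hx; omega)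
    have e3 : (replicate (m.count (k + 1)) (2 * k + 3)).filter (fun x => k + 1 < x) =
        replicate (m.count (k + 1)) (2 * k + 3) :=
      filter_eq_self.2 (fun x hx => by have := eq_of_mem_replicate hx; omega)
    have e4 : (replicate 1 (2 * k + 2)).filter (fun x => k + 1 < x) =
        replicate 1 (2 * k + 2) :=
      filter_eq_self.2 (fun x hx => by have := eq_of_mem_replicate hx; omega)
    rw [e2, e3, e4, card_replicate, card_replicate, card_replicate]
    omega
  · have hs := sum_unstepB hcond
    simp only [wt, trap_succ k] at hw ⊢
    omega
  · rw [count_unstepB]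
    split_ifs <;> omega

set_option maxHeartbeats 2000000 in
lemma stepB_leftInv {k : ℕ} {m : Multiset ℕ} (hk1 : m.count (k + 1) = 0)
    (hB : 1 ≤ m.count (2 * k + 2)) :
    unstepB k (stepB k m) = m := by
  have hco2 := hc02 k m
  ext j
  rcases eq_or_ne j (k + 1) with rfl | hj1
  · simp only [count_unstepB, count_stepB, eq_self_iff_true, true_or, or_true, if_true]
    split_ifs <;> omega
  rcases eq_or_ne j (k + 2) with rfl | hj2
  · simp only [count_unstepB, count_stepB, eq_self_iff_true, true_or, or_true, if_true]
    split_ifs <;> omega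
  rcases eq_or_ne j (2 * k + 2) with rfl | hj3
  · simp only [count_unstepB, count_stepB, eq_self_iff_true, true_or, or_true, if_true]
    split_ifs <;> omega
  rcases eq_or_ne j (2 * k + 3) with rfl | hj4
  · simp only [count_unstepB, count_stepB, eq_self_iff_true, true_or, or_true, if_true]
    split_ifs <;> omega
  · simp only [count_unstepB, count_stepB]
    split_ifs <;> omega

set_option maxHeartbeats 2000000 in
lemma stepB_rightInv {k : ℕ} {m : Multiset ℕ} (h2' : m.count (2 * k + 3) = 0)
    (hcond : m.count (k + 1) ≤ m.count (k + 2)) :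
    stepB k (unstepB k m) = m := by
  have hco2 := hc02 k m
  ext j
  rcases eq_or_ne j (k + 1) with rfl | hj1
  · simp only [count_stepB, count_unstepB, eq_self_iff_true, true_or, or_true, if_true]
    split_ifs <;> omega
  rcases eq_or_ne j (k + 2) with rfl | hj2
  · simp only [count_stepB, count_unstepB, eq_self_iff_true, true_or, or_true, if_true]
    split_ifs <;> omega
  rcases eq_or_ne j (2 * k + 2) with rfl | hj3
  · simp only [count_stepB, count_unstepB, eq_self_iff_true, true_or, or_true, if_true]
    split_ifs <;> omega
  rcases eq_or_ne j (2 * k + 3) with rfl | hj4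
  · simp only [count_stepB, count_unstepB, eq_self_iff_true, true_or, or_true, if_true]
    split_ifs <;> omega
  · simp only [count_stepB, count_unstepB]
    split_ifs <;> omega

/-! ### Finiteness -/

lemma finite_aux (s : ℕ) : {m : Multiset ℕ | (∀ x ∈ m, 0 < x) ∧ m.sum = s}.Finite := by
  have hsub : {m : Multiset ℕ | (∀ x ∈ m, 0 < x) ∧ m.sum = s} ⊆
      Set.range (fun p : Nat.Partition s => p.parts) := by
    rintro m ⟨h1, h2⟩
    exact ⟨⟨m, fun {i} hi => h1 i hi, h2⟩, rfl⟩
  exact (Set.finite_range _).subset hsub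

lemma multE_le_iff {k : ℕ} (hk : k ≠ 0) {m : Multiset ℕ} :
    multE k m ≤ multE (k + 1) m ↔ m.count k ≤ m.count (k + 1) := by
  unfold multE
  rw [if_neg hk, if_neg (by omega), Nat.cast_le]

/-! ### Main theorem -/

/-- Combinatorial telescoping relation for Sylvester's identity. -/
theorem sylvester_telescoping (n k N : ℕ) (hn : 1 ≤ n) :
    Nat.card {lam | lam ∈ Q n k ∧ wt k lam = N} =
      Nat.card {lam | lam ∈ Q n k ∧ wt k lam + n = N} +
      Nat.card {lam | lam ∈ H n k ∧ wt k lam = N} +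
      Nat.card {lam | lam ∈ H n (k + 1) ∧ wt (k + 1) lam = N} := by
  classical
  set t : ℕ := k * (3 * k + 1) / 2 with ht
  -- finiteness of all the sets involved
  have fS1 : {lam | lam ∈ Q n k ∧ wt k lam = N}.Finite :=
    (finite_aux (N - t)).subset (fun m hm => ⟨(mem_Q_iff.1 hm.1).1, by
      have := hm.2; simp only [wt] at this; omega⟩)
  have fSH : {lam | lam ∈ H n k ∧ wt k lam = N}.Finite :=
    (finite_aux (N - t)).subset (fun m hm => ⟨(mem_Q_iff.1 hm.1.1).1, by
      have := hm.2; simp only [wt] at this; omega⟩)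
  have fC : (Cset n k N).Finite :=
    (finite_aux (N - t)).subset (fun m hm => ⟨(mem_Q_iff.1 hm.1).1, by
      have := hm.2.2; simp only [wt] at this; omega⟩)
  have fD : (D n k N).Finite :=
    (finite_aux (N - t - k)).subset (fun m hm => ⟨hm.1, by
      have := hm.2.2.2; simp only [wt] at this; omega⟩)
  have fDA : (DA n k N).Finite := fD.subset (fun m hm => hm.1)
  have fDB : (DB n k N).Finite := fD.subset (fun m hm => hm.1)
  have fS2 : (S2set n k N).Finite :=
    (finite_aux (N - t - n)).subset (fun m hm => ⟨(mem_Q_iff.1 hm.1).1, by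
      have := hm.2; simp only [wt] at this; omega⟩)
  have fS3 : (S3set n k N).Finite :=
    (finite_aux (N - (k + 1) * (3 * (k + 1) + 1) / 2)).subset (fun m hm =>
      ⟨(mem_Q_iff.1 hm.1.1).1, by have := hm.2; simp only [wt] at this; omega⟩)
  -- decomposition of S1
  have hdec : {lam | lam ∈ Q n k ∧ wt k lam = N} =
      {lam | lam ∈ H n k ∧ wt k lam = N} ∪ Cset n k N := by
    ext m
    constructor
    · rintro ⟨hQ, hw⟩
      by_cases hc : multE k m ≤ multE (k + 1) m
      · exact Or.inl ⟨⟨hQ, hc⟩, hw⟩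
      · refine Or.inr ⟨hQ, ?_, hw⟩
        rcases Nat.eq_zero_or_pos k with rfl | hk
        · exact Or.inr rfl
        · exact Or.inl (by have := (multE_le_iff (by omega)).not.1 hc; omega)
    · rintro (⟨hH, hw⟩ | ⟨hQ, _, hw⟩)
      · exact ⟨hH.1, hw⟩
      · exact ⟨hQ, hw⟩
  have hdisj : Disjoint {lam | lam ∈ H n k ∧ wt k lam = N} (Cset n k N) := by
    rw [Set.disjoint_left]
    rintro m ⟨hH, hw⟩ ⟨hQ, hor, hw'⟩
    rcases hor with hlt | rfl
    · rcases Nat.eq_zero_or_pos k with rfl | hk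
      · have := hH.2
        unfold multE at this
        rw [if_pos rfl, if_neg (by omega), top_le_iff] at this
        exact (ENat.coe_ne_top _) this
      · have := (multE_le_iff (by omega)).1 hH.2; omega
    · have := hH.2
      unfold multE at this
      rw [if_pos rfl, if_neg (by omega), top_le_iff] at this
      exact (ENat.coe_ne_top _) this
  have hdecD : D n k N = DA n k N ∪ DB n k N := by
    ext m
    constructor
    · intro hm
      by_cases hc : m.count (2 * k + 2) = 0
      · exact Or.inl ⟨hm, hc⟩
      · exact Or.inr ⟨hm, hc⟩
    · rintro (⟨hm, _⟩ | ⟨hm, _⟩) <;> exact hm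
  have hdisjD : Disjoint (DA n k N) (DB n k N) := by
    rw [Set.disjoint_left]
    rintro m ⟨_, h1⟩ ⟨_, h2⟩
    exact h2 h1
  -- the bijections
  have hbij1 : Set.BijOn (step1 k) (Cset n k N) (D n k N) := by
    refine Set.InvOn.bijOn ⟨?_, ?_⟩ step1_mapsTo unstep1_mapsTo
    · rintro m ⟨hQ, hC, hw⟩
      obtain ⟨h1, h2, h3⟩ := mem_Q_iff.1 hQ
      exact step1_leftInv (count_zero_eq h1) h2 hC
    · rintro m ⟨h1, hk1, h3, hw⟩
      exact step1_rightInv h1 hk1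
  have hbijA : Set.BijOn (stepA k) (DA n k N) (S2set n k N) := by
    refine Set.InvOn.bijOn ⟨?_, ?_⟩ stepA_mapsTo unstepA_mapsTo
    · rintro m ⟨⟨h1, hk1, h3, hw⟩, hA⟩
      exact stepA_leftInv hk1 hA
    · rintro m ⟨hQ, hw⟩
      exact stepA_rightInv (mem_Q_iff.1 hQ).2.1
  have hbijB : Set.BijOn (stepB k) (DB n k N) (S3set n k N) := by
    refine Set.InvOn.bijOn ⟨?_, ?_⟩ stepB_mapsTo unstepB_mapsTo
    · rintro m ⟨⟨h1, hk1, h3, hw⟩, hB⟩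
      exact stepB_leftInv hk1 (by omega)
    · rintro m ⟨hH, hw⟩
      obtain ⟨hQ', hcond⟩ := mem_H_iff.1 hH
      exact stepB_rightInv (mem_Q_iff.1 hQ').2.1 hcond
  -- cardinality bookkeeping
  have e1 : (Cset n k N).ncard = (D n k N).ncard := by
    rw [← hbij1.image_eq, Set.ncard_image_of_injOn hbij1.injOn]
  have e2 : (DA n k N).ncard = (S2set n k N).ncard := by
    rw [← hbijA.image_eq, Set.ncard_image_of_injOn hbijA.injOn]
  have e3 : (DB n k N).ncard = (S3set n k N).ncard := by
    rw [← hbijB.image_eq, Set.ncard_image_of_injOn hbijB.injOn]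
  have e4 : {lam | lam ∈ Q n k ∧ wt k lam = N}.ncard =
      {lam | lam ∈ H n k ∧ wt k lam = N}.ncard + (Cset n k N).ncard := by
    rw [hdec, Set.ncard_union_eq hdisj fSH fC]
  have e5 : (D n k N).ncard = (DA n k N).ncard + (DB n k N).ncard := by
    rw [hdecD, Set.ncard_union_eq hdisjD fDA fDB]
  rw [Nat.card_coe_set_eq, Nat.card_coe_set_eq, Nat.card_coe_set_eq,
    Nat.card_coe_set_eq]
  have hS2 : {lam | lam ∈ Q n k ∧ wt k lam + n = N} = S2set n k N := rfl
  have hS3 : {lam | lam ∈ H n (k + 1) ∧ wt (k + 1) lam = N} = S3set n k N := rfl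
  rw [hS2, hS3]
  omega
end

section
/- Functional equation for the Sylvester series: Let q be a complex number with |q| < 1 and let x be a complex number with x q^j ≠ 1 for every integer j ≥ 1. Define f(x) = ∑_{k=0}^∞ (−1)^k q^{k(3k+1)/2} x^k (1 − x q^{2k+1}) / ((q;q)_k · (x q^{k+1};q)_∞), which converges absolutely. Then f(x) = f(xq). -/
/-! Write `c_k = (-1)^k q^{k(3k+1)/2} x^k / (q;q)_k`. Splitting the numerator as
`1 - x q^{2k+1} = (1 - q^k) + q^k (1 - x q^{k+1})` writes the `k`-th term of `f(x)` as `C_k + D_k`,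
with `C_k = c_k (1 - q^k) / (x q^{k+1};q)_∞` and `D_k = c_k q^k / (x q^{k+2};q)_∞`, while the `k`-th
term of `f(xq)` is `D_k + C_{k+1}`. As `C_0 = 0`, both series sum to `∑ C_k + ∑ D_k`.
Absolute convergence comes from the factor `|q|^{k^2}` in `c_k`, against which `1/(q;q)_k` and
`1/(x q^{k+1};q)_∞` grow at most geometrically. -/

/-- The finite q-Pochhammer symbol `(a; q)_k = ∏_{i=0}^{k-1} (1 - a q^i)`. -/
noncomputable def qPoch (q a : ℂ) (k : ℕ) : ℂ := ∏ i ∈ Finset.range k, (1 - a * q ^ i)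

/-- The infinite q-Pochhammer symbol `(a; q)_∞ = ∏_{i=0}^{∞} (1 - a q^i)`. -/
noncomputable def qPochInf (q a : ℂ) : ℂ := ∏' i : ℕ, (1 - a * q ^ i)

/-- The summand `F_k(x)` of the Sylvester series. -/
noncomputable def F (q x : ℂ) (k : ℕ) : ℂ :=
  (-1) ^ k * q ^ (k * (3 * k + 1) / 2) * x ^ k * (1 - x * q ^ (2 * k + 1)) /
    (qPoch q q k * qPochInf q (x * q ^ (k + 1)))

/-- The Sylvester series `f(x)`. -/
noncomputable def sylvesterF (q x : ℂ) : ℂ := ∑' k : ℕ, F q x k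

open Finset Filter Topology

section QPochhammer

variable {q : ℂ}

lemma summable_norm_neg_mul_pow (hq : ‖q‖ < 1) (a : ℂ) :
    Summable fun i : ℕ => ‖-(a * q ^ i)‖ := by
  simpa [norm_mul, norm_pow] using
    (summable_geometric_of_lt_one (norm_nonneg q) hq).mul_left ‖a‖

lemma multipliable_one_sub_mul_pow (hq : ‖q‖ < 1) (a : ℂ) :
    Multipliable fun i : ℕ => 1 - a * q ^ i := by
  simpa [sub_eq_add_neg] using multipliable_one_add_of_summable (summable_norm_neg_mul_pow hq a)

lemma qPochInf_ne_zero (hq : ‖q‖ < 1) {a : ℂ} (ha : ∀ i : ℕ, a * q ^ i ≠ 1) :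
    qPochInf q a ≠ 0 := by
  simpa [qPochInf, sub_eq_add_neg] using tprod_one_add_ne_zero_of_summable
    (fun i => by simpa [← sub_eq_add_neg, sub_eq_zero] using (ha i).symm)
    (summable_norm_neg_mul_pow hq a)

lemma qPoch_mul_qPochInf (hq : ‖q‖ < 1) (a : ℂ) (k : ℕ) :
    qPoch q a k * qPochInf q (a * q ^ k) = qPochInf q a := by
  have hshift : (fun i : ℕ => 1 - a * q ^ (i + k)) = fun i : ℕ => 1 - a * q ^ k * q ^ i := by
    ext i; ring
  have hmul : Multipliable fun i : ℕ => 1 - a * q ^ (i + k) := by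
    simpa only [hshift] using multipliable_one_sub_mul_pow hq (a * q ^ k)
  rw [qPoch, qPochInf, qPochInf,
    ← Multipliable.prod_mul_tprod_nat_mul' (f := fun i => 1 - a * q ^ i) hmul, hshift]

lemma norm_mul_pow_le (hq : ‖q‖ ≤ 1) (a : ℂ) (i : ℕ) : ‖a * q ^ i‖ ≤ ‖a‖ := by
  rw [norm_mul, norm_pow]
  exact mul_le_of_le_one_right (norm_nonneg a) (pow_le_one₀ (norm_nonneg q) hq)

lemma norm_one_sub_mul_pow_le (hq : ‖q‖ ≤ 1) (a : ℂ) (i : ℕ) : ‖1 - a * q ^ i‖ ≤ 1 + ‖a‖ :=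
  (norm_sub_le _ _).trans (by rw [norm_one]; gcongr; exact norm_mul_pow_le hq a i)

lemma norm_qPoch_le (hq : ‖q‖ ≤ 1) (a : ℂ) (k : ℕ) : ‖qPoch q a k‖ ≤ (1 + ‖a‖) ^ k := by
  rw [qPoch, norm_prod, pow_eq_prod_const]
  exact prod_le_prod (fun _ _ => norm_nonneg _) fun i _ => norm_one_sub_mul_pow_le hq a i

lemma one_sub_norm_pow_le_norm_qPoch (hq : ‖q‖ ≤ 1) {a : ℂ} (ha : ‖a‖ ≤ 1) (k : ℕ) :
    (1 - ‖a‖) ^ k ≤ ‖qPoch q a k‖ := by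
  rw [qPoch, norm_prod, pow_eq_prod_const]
  refine prod_le_prod (fun _ _ => sub_nonneg.2 ha) fun i _ => ?_
  have := norm_sub_norm_le (1 : ℂ) (a * q ^ i)
  rw [norm_one] at this
  linarith [norm_mul_pow_le hq a i]

lemma norm_qPochInf_le (hq : ‖q‖ < 1) (a : ℂ) (k : ℕ) :
    ‖qPochInf q a‖ ≤ (1 + ‖a‖) ^ k * ‖qPochInf q (a * q ^ k)‖ := by
  rw [← qPoch_mul_qPochInf hq a k, norm_mul]
  gcongr
  exact norm_qPoch_le hq.le a k

lemma qPochInf_eq_one_sub_mul (hq : ‖q‖ < 1) (a : ℂ) :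
    qPochInf q a = (1 - a) * qPochInf q (a * q) := by
  simpa [qPoch] using (qPoch_mul_qPochInf hq a 1).symm

end QPochhammer

lemma summable_pow_mul_self_mul_pow {r R : ℝ} (hr0 : 0 ≤ r) (hr : r < 1) (hR : 0 ≤ R) :
    Summable fun k : ℕ => r ^ (k * k) * R ^ k := by
  have hlim : Tendsto (fun k : ℕ => r ^ k * R) atTop (𝓝 0) := by
    simpa using (tendsto_pow_atTop_nhds_zero_of_lt_one hr0 hr).mul_const R
  refine Summable.of_norm_bounded_eventually_nat
    (summable_geometric_of_lt_one (by norm_num : (0 : ℝ) ≤ 1 / 2) (by norm_num)) ?_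
  filter_upwards [hlim.eventually_le_const (by norm_num : (0 : ℝ) < 1 / 2)] with k hk
  rw [Real.norm_of_nonneg (by positivity), pow_mul, ← mul_pow]
  exact pow_le_pow_left₀ (by positivity) hk k

lemma summable_norm_mul_of_norm_le {ι R : Type*} [SeminormedRing R] {u w : ι → R} {B : ℝ}
    (hu : Summable fun i => ‖u i‖) (hw : ∀ i, ‖w i‖ ≤ B) :
    Summable fun i => ‖u i * w i‖ :=
  (hu.mul_right B).of_nonneg_of_le (fun _ => norm_nonneg _) fun i =>
    (norm_mul_le _ _).trans (mul_le_mul_of_nonneg_left (hw i) (norm_nonneg _))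

lemma tsum_eq_tsum_of_eq_add_of_eq_add_succ {E : Type*} [AddCommGroup E] [TopologicalSpace E]
    [IsTopologicalAddGroup E] [T2Space E] {f g c d : ℕ → E} (hc : Summable c) (hd : Summable d)
    (hc0 : c 0 = 0) (hf : ∀ k, f k = c k + d k) (hg : ∀ k, g k = d k + c (k + 1)) :
    ∑' k, f k = ∑' k, g k := by
  have hc' : Summable fun k => c (k + 1) := (summable_nat_add_iff 1).2 hc
  calc ∑' k, f k = ∑' k, c k + ∑' k, d k := by rw [tsum_congr hf, hc.tsum_add hd]
    _ = ∑' k, d k + ∑' k, c (k + 1) := by rw [hc.tsum_eq_zero_add, hc0, zero_add, add_comm]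
    _ = ∑' k, g k := by rw [tsum_congr hg, hd.tsum_add hc']

section Sylvester

variable {q x : ℂ}

noncomputable def sylvesterCoeff (q x : ℂ) (k : ℕ) : ℂ :=
  (-1) ^ k * q ^ (k * (3 * k + 1) / 2) * x ^ k / qPoch q q k

lemma norm_sylvesterCoeff_le (hq : ‖q‖ < 1) (x : ℂ) (k : ℕ) :
    ‖sylvesterCoeff q x k‖ ≤ ‖q‖ ^ (k * k) * (‖x‖ / (1 - ‖q‖)) ^ k := by
  have hexp : k * k ≤ k * (3 * k + 1) / 2 := by
    rw [Nat.le_div_iff_mul_le two_pos]; nlinarith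
  have hpos : 0 < (1 - ‖q‖) ^ k := pow_pos (sub_pos.2 hq) k
  rw [sylvesterCoeff, norm_div, norm_mul, norm_mul, norm_pow, norm_pow, norm_pow, norm_neg,
    norm_one, one_pow, one_mul, div_pow, ← mul_div_assoc]
  exact div_le_div₀ (by positivity)
    (mul_le_mul_of_nonneg_right (pow_le_pow_of_le_one (norm_nonneg q) hq.le hexp)
      (by positivity)) hpos
    (one_sub_norm_pow_le_norm_qPoch hq.le hq.le k)

lemma summable_norm_sylvesterCoeff_div_qPochInf (hq : ‖q‖ < 1) {a : ℂ} (ha : qPochInf q a ≠ 0)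
    (x : ℂ) : Summable fun k => ‖sylvesterCoeff q x k / qPochInf q (a * q ^ k)‖ := by
  set R := ‖x‖ * (1 + ‖a‖) / (1 - ‖q‖)
  have hR : 0 ≤ R := div_nonneg (by positivity) (sub_pos.2 hq).le
  refine ((summable_pow_mul_self_mul_pow (norm_nonneg q) hq hR).mul_left
    ‖qPochInf q a‖⁻¹).of_nonneg_of_le (fun _ => norm_nonneg _) fun k => ?_
  have hPa : 0 < ‖qPochInf q a‖ := norm_pos_iff.2 ha
  have hPk : ‖qPochInf q a‖ / (1 + ‖a‖) ^ k ≤ ‖qPochInf q (a * q ^ k)‖ := by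
    rw [div_le_iff₀ (by positivity), mul_comm]
    exact norm_qPochInf_le hq a k
  rw [norm_div]
  calc ‖sylvesterCoeff q x k‖ / ‖qPochInf q (a * q ^ k)‖
      ≤ ‖q‖ ^ (k * k) * (‖x‖ / (1 - ‖q‖)) ^ k / (‖qPochInf q a‖ / (1 + ‖a‖) ^ k) :=
        div_le_div₀ (by positivity) (norm_sylvesterCoeff_le hq x k) (by positivity) hPk
    _ = ‖qPochInf q a‖⁻¹ * (‖q‖ ^ (k * k) * R ^ k) := by
        simp only [R, div_pow, mul_pow]
        field_simp

lemma summable_norm_sylvesterCoeff_div (hq : ‖q‖ < 1) (hx : ∀ j : ℕ, 1 ≤ j → x * q ^ j ≠ 1)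
    {n : ℕ} (hn : 1 ≤ n) :
    Summable fun k => ‖sylvesterCoeff q x k / qPochInf q (x * q ^ (k + n))‖ := by
  have ha : qPochInf q (x * q ^ n) ≠ 0 :=
    qPochInf_ne_zero hq fun i => by rw [mul_assoc, ← pow_add]; exact hx _ (by omega)
  simpa only [mul_assoc, ← pow_add, add_comm n] using
    summable_norm_sylvesterCoeff_div_qPochInf hq ha x

noncomputable def sylvesterC (q x : ℂ) (k : ℕ) : ℂ :=
  sylvesterCoeff q x k / qPochInf q (x * q ^ (k + 1)) * (1 - q ^ k)

noncomputable def sylvesterD (q x : ℂ) (k : ℕ) : ℂ :=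
  sylvesterCoeff q x k / qPochInf q (x * q ^ (k + 2)) * q ^ k

lemma F_eq_sylvesterCoeff_div_mul (k : ℕ) :
    F q x k = sylvesterCoeff q x k / qPochInf q (x * q ^ (k + 1)) * (1 - x * q ^ (2 * k + 1)) := by
  rw [F, sylvesterCoeff]; ring

lemma summable_norm_F (hq : ‖q‖ < 1) (hx : ∀ j : ℕ, 1 ≤ j → x * q ^ j ≠ 1) :
    Summable fun k => ‖F q x k‖ := by
  simpa only [F_eq_sylvesterCoeff_div_mul] using summable_norm_mul_of_norm_le
    (summable_norm_sylvesterCoeff_div hq hx le_rfl) fun k => norm_one_sub_mul_pow_le hq.le x _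

lemma summable_sylvesterC (hq : ‖q‖ < 1) (hx : ∀ j : ℕ, 1 ≤ j → x * q ^ j ≠ 1) :
    Summable (sylvesterC q x) :=
  (summable_norm_mul_of_norm_le (summable_norm_sylvesterCoeff_div hq hx le_rfl)
    fun k => by simpa using norm_one_sub_mul_pow_le hq.le 1 k).of_norm

lemma summable_sylvesterD (hq : ‖q‖ < 1) (hx : ∀ j : ℕ, 1 ≤ j → x * q ^ j ≠ 1) :
    Summable (sylvesterD q x) :=
  (summable_norm_mul_of_norm_le (summable_norm_sylvesterCoeff_div hq hx one_le_two)
    fun k => by simpa using norm_mul_pow_le hq.le 1 k).of_norm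

lemma sylvesterC_zero : sylvesterC q x 0 = 0 := by simp [sylvesterC]

lemma F_eq_sylvesterC_add_sylvesterD (hq : ‖q‖ < 1) {k : ℕ} (hxk : x * q ^ (k + 1) ≠ 1) :
    F q x k = sylvesterC q x k + sylvesterD q x k := by
  have hsplit : qPochInf q (x * q ^ (k + 1)) =
      (1 - x * q ^ (k + 1)) * qPochInf q (x * q ^ (k + 2)) := by
    rw [qPochInf_eq_one_sub_mul hq, mul_assoc, ← pow_succ]
  have hu : 1 - x * q ^ (k + 1) ≠ 0 := sub_ne_zero.2 hxk.symm
  rw [F_eq_sylvesterCoeff_div_mul, sylvesterC, sylvesterD, hsplit]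
  field_simp
  ring

lemma F_mul_eq_sylvesterD_add_sylvesterC_succ (hq : ‖q‖ < 1) (k : ℕ) :
    F q (x * q) k = sylvesterD q x k + sylvesterC q x (k + 1) := by
  have hexp : (k + 1) * (3 * (k + 1) + 1) / 2 = k * (3 * k + 1) / 2 + (3 * k + 2) := by
    rw [show (k + 1) * (3 * (k + 1) + 1) = k * (3 * k + 1) + 2 * (3 * k + 2) by ring,
      Nat.add_mul_div_left _ _ two_pos]
  have hpoch : qPoch q q (k + 1) = qPoch q q k * (1 - q ^ (k + 1)) := by
    rw [qPoch, prod_range_succ, ← pow_succ']; rfl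
  have hv : 1 - q ^ (k + 1) ≠ 0 := sub_ne_zero.2 fun h =>
    (pow_lt_one₀ (norm_nonneg q) hq k.succ_ne_zero).ne (by rw [← norm_pow, ← h, norm_one])
  rw [F, sylvesterD, sylvesterC, sylvesterCoeff, sylvesterCoeff, hexp, hpoch,
    show x * q * q ^ (k + 1) = x * q ^ (k + 2) by ring]
  field_simp
  ring

end Sylvester

/-- Functional equation for the Sylvester series: `f(x) = f(xq)`. -/
theorem sylvester_functional_equation (q x : ℂ) (hq : ‖q‖ < 1)
    (hx : ∀ j : ℕ, 1 ≤ j → x * q ^ j ≠ 1) :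
    Summable (fun k : ℕ => ‖F q x k‖) ∧ sylvesterF q x = sylvesterF q (x * q) :=
  ⟨summable_norm_F hq hx,
    tsum_eq_tsum_of_eq_add_of_eq_add_succ (summable_sylvesterC hq hx) (summable_sylvesterD hq hx)
      sylvesterC_zero (fun k => F_eq_sylvesterC_add_sylvesterD hq (hx _ (by omega)))
      (F_mul_eq_sylvesterD_add_sylvesterC_succ hq)⟩
end
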